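/- arXiv:1903.01404 — 5 statements merged into one kernel-verified Lean document; each statement's English description precedes it below -/
import Mathlib

section
/- Let R0 > 0 and let m : [0,∞) × [0,R0] → [0,∞) be a function such that j ↦ m(j,r) is nonincreasing for each fixed r and r ↦ m(j,r) is nondecreasing for each fixed j. Suppose there exist k0 ≥ 0, C > 0, ν > 0, δ > 0 and μ > 1 such that m(j,r) ≤ C · m(k,R)^μ / ((j−k)^ν (R−r)^δ) for all j > k ≥ k0 and all 0 ≤ r < R ≤ R0. Then for every σ with 0 < σ < 1 one has m(k0 + d, (1−σ)R0) = 0, where d is the positive real number determined by d^ν = 2^{(ν+δ)·μ/(μ−1)} · C · m(k0,R0)^{μ−1} / (σ^δ R0^δ). -/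
/-!
Along the levels `k n = k0 + d (1 - 2⁻ⁿ)` and radii `r n = (1 - σ) R0 + σ R0 2⁻ⁿ` the consecutive
gaps are `d 2⁻⁽ⁿ⁺¹⁾` and `σ R0 2⁻⁽ⁿ⁺¹⁾`, so the hypothesis bounds `m (k (n+1)) (r (n+1))` by
`C m (k n) (r n) ^ μ 2^((n+1)(ν+δ)) / (d^ν (σ R0)^δ)`. With `α = (ν + δ) / (μ - 1)`, the value of
`d` is exactly the one for which the bound `m (k n) (r n) ≤ m k0 R0 2^(-α n)` propagates by
induction. Monotonicity in both variables bounds `m (k0 + d) ((1 - σ) R0)` by every `m (k n) (r n)`,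
and these tend to `0`.
-/

open Real Filter Topology

lemma rpow_iteration_step_eq {C M d s ν δ μ α t : ℝ} (hC : 0 < C) (hM : 0 < M) (hd : 0 < d)
    (hs : 0 < s) (ht : 0 < t) (hα : α * (μ - 1) = ν + δ)
    (hdν : d ^ ν * s ^ δ = 2 ^ (α * μ) * C * M ^ (μ - 1)) :
    C * (M * (2 * t) ^ α) ^ μ / ((d * t) ^ ν * (s * t) ^ δ) = M * t ^ α := by
  have hden : (d * t) ^ ν * (s * t) ^ δ = 2 ^ (α * μ) * C * M ^ (μ - 1) * t ^ (α * (μ - 1)) := by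
    rw [mul_rpow hd.le ht.le, mul_rpow hs.le ht.le, hα, rpow_add ht, ← hdν]; ring
  have hnum : (M * (2 * t) ^ α) ^ μ = 2 ^ (α * μ) * M ^ (1 + (μ - 1)) * t ^ (α + α * (μ - 1)) := by
    rw [mul_rpow hM.le (by positivity), ← rpow_mul (by positivity), mul_rpow zero_le_two ht.le]
    ring_nf
  rw [hden, hnum, rpow_add hM, rpow_add ht, rpow_one]
  field_simp

lemma le_mul_half_pow_rpow_of_recursive_bound {y : ℕ → ℝ} {C M d s ν δ μ α : ℝ} (hC : 0 < C)
    (hM : 0 < M) (hd : 0 < d) (hs : 0 < s) (hμ : 0 ≤ μ) (hα : α * (μ - 1) = ν + δ)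
    (hdν : d ^ ν * s ^ δ = 2 ^ (α * μ) * C * M ^ (μ - 1)) (hy_nonneg : ∀ n, 0 ≤ y n)
    (hy_zero : y 0 ≤ M)
    (hy : ∀ n, y (n + 1) ≤
      C * y n ^ μ / ((d * (1 / 2) ^ (n + 1)) ^ ν * (s * (1 / 2) ^ (n + 1)) ^ δ))
    (n : ℕ) : y n ≤ M * ((1 / 2) ^ n) ^ α := by
  induction n with
  | zero => simpa using hy_zero
  | succ n ih =>
    have hpow : ((1 : ℝ) / 2) ^ n = 2 * (1 / 2) ^ (n + 1) := by rw [pow_succ]; ring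
    calc y (n + 1)
        ≤ C * y n ^ μ / ((d * (1 / 2) ^ (n + 1)) ^ ν * (s * (1 / 2) ^ (n + 1)) ^ δ) := hy n
      _ ≤ C * (M * (2 * (1 / 2) ^ (n + 1)) ^ α) ^ μ /
          ((d * (1 / 2) ^ (n + 1)) ^ ν * (s * (1 / 2) ^ (n + 1)) ^ δ) := by
        rw [← hpow]; gcongr; exact hy_nonneg n
      _ = M * ((1 / 2) ^ (n + 1)) ^ α := rpow_iteration_step_eq hC hM hd hs (by positivity) hα hdν

lemma tendsto_mul_half_pow_rpow {M α : ℝ} (hα : 0 < α) :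
    Tendsto (fun n : ℕ => M * ((1 / 2 : ℝ) ^ n) ^ α) atTop (𝓝 0) := by
  simpa using ((tendsto_pow_atTop_nhds_zero_of_lt_one (by norm_num : (0 : ℝ) ≤ 1 / 2)
    (by norm_num)).rpow_const_nhds_zero hα).const_mul M

noncomputable def dyadicApproach (a b : ℝ) (n : ℕ) : ℝ := b + (a - b) * (1 / 2) ^ n

@[simp] lemma dyadicApproach_zero (a b : ℝ) : dyadicApproach a b 0 = a := by
  simp [dyadicApproach]

lemma dyadicApproach_succ_sub (a b : ℝ) (n : ℕ) :
    dyadicApproach a b (n + 1) - dyadicApproach a b n = (b - a) * (1 / 2) ^ (n + 1) := by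
  simp only [dyadicApproach, pow_succ]; ring

lemma dyadicApproach_mem_uIcc (a b : ℝ) (n : ℕ) : dyadicApproach a b n ∈ Set.uIcc a b := by
  have h0 : (0 : ℝ) ≤ (1 / 2) ^ n := by positivity
  have h1 : ((1 : ℝ) / 2) ^ n ≤ 1 := pow_le_one₀ (by norm_num) (by norm_num)
  rcases le_total a b with h | h
  · rw [Set.uIcc_of_le h]; constructor <;> simp only [dyadicApproach] <;> nlinarith
  · rw [Set.uIcc_of_ge h]; constructor <;> simp only [dyadicApproach] <;> nlinarith

lemma level_le_mul_half_pow_rpow {m : ℝ → ℝ → ℝ} {R0 k0 C ν δ μ α d s : ℝ}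
    (hm_nonneg : ∀ j r, 0 ≤ j → 0 ≤ r → r ≤ R0 → 0 ≤ m j r)
    (hm_j : ∀ r, 0 ≤ r → r ≤ R0 → ∀ j₁ j₂, 0 ≤ j₁ → j₁ ≤ j₂ → m j₂ r ≤ m j₁ r)
    (hm_r : ∀ j, 0 ≤ j → ∀ r₁ r₂, 0 ≤ r₁ → r₁ ≤ r₂ → r₂ ≤ R0 → m j r₁ ≤ m j r₂)
    (hiter : ∀ j k r R, k0 ≤ k → k < j → 0 ≤ r → r < R → R ≤ R0 →
      m j r ≤ C * (m k R) ^ μ / ((j - k) ^ ν * (R - r) ^ δ))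
    (hk0 : 0 ≤ k0) (hC : 0 < C) (hμ : 0 ≤ μ) (hd : 0 < d) (hs : 0 < s) (hsR : s ≤ R0)
    (hM : 0 < m k0 R0) (hα : α * (μ - 1) = ν + δ)
    (hdν : d ^ ν * s ^ δ = 2 ^ (α * μ) * C * m k0 R0 ^ (μ - 1)) (n : ℕ) :
    m (k0 + d) (R0 - s) ≤ m k0 R0 * ((1 / 2) ^ n) ^ α := by
  set k := dyadicApproach k0 (k0 + d)
  set r := dyadicApproach R0 (R0 - s)
  have hk n : k n ∈ Set.Icc k0 (k0 + d) := by
    simpa [Set.uIcc_of_le, hd.le] using dyadicApproach_mem_uIcc k0 (k0 + d) n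
  have hr n : r n ∈ Set.Icc (R0 - s) R0 := by
    simpa [Set.uIcc_of_ge, hs.le] using dyadicApproach_mem_uIcc R0 (R0 - s) n
  have hk_nonneg n : 0 ≤ k n := hk0.trans (hk n).1
  have hr_nonneg n : 0 ≤ r n := (sub_nonneg.2 hsR).trans (hr n).1
  have hk_step n : k (n + 1) - k n = d * (1 / 2) ^ (n + 1) := by
    simp [k, dyadicApproach_succ_sub]
  have hr_step n : r n - r (n + 1) = s * (1 / 2) ^ (n + 1) := by
    rw [← neg_sub, dyadicApproach_succ_sub]; ring
  have hdecay : m (k n) (r n) ≤ m k0 R0 * ((1 / 2) ^ n) ^ α := by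
    refine le_mul_half_pow_rpow_of_recursive_bound (y := fun n => m (k n) (r n)) hC hM hd hs hμ
      hα hdν (fun n => hm_nonneg _ _ (hk_nonneg n) (hr_nonneg n) (hr n).2) (by simp [k, r])
      (fun n => ?_) n
    rw [← hk_step, ← hr_step]
    exact hiter _ _ _ _ (hk n).1 (sub_pos.1 (hk_step n ▸ by positivity)) (hr_nonneg _)
      (sub_pos.1 (hr_step n ▸ by positivity)) (hr n).2
  calc m (k0 + d) (R0 - s)
      ≤ m (k0 + d) (r n) :=
        hm_r _ (hk0.trans (by linarith)) _ _ (sub_nonneg.2 hsR) (hr n).1 (hr n).2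
    _ ≤ m (k n) (r n) := hm_j _ (hr_nonneg n) (hr n).2 _ _ (hk_nonneg n) (hk n).2
    _ ≤ _ := hdecay

/-- Stampacchia-type iteration lemma for a two-parameter level-set function. -/
theorem stampacchia_two_parameter
    (R0 : ℝ) (hR0 : 0 < R0) (m : ℝ → ℝ → ℝ)
    (hm_nonneg : ∀ j r, 0 ≤ j → 0 ≤ r → r ≤ R0 → 0 ≤ m j r)
    (hm_j : ∀ r, 0 ≤ r → r ≤ R0 → ∀ j₁ j₂, 0 ≤ j₁ → j₁ ≤ j₂ → m j₂ r ≤ m j₁ r)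
    (hm_r : ∀ j, 0 ≤ j → ∀ r₁ r₂, 0 ≤ r₁ → r₁ ≤ r₂ → r₂ ≤ R0 → m j r₁ ≤ m j r₂)
    (k0 C ν δ μ : ℝ) (hk0 : 0 ≤ k0) (hC : 0 < C) (hν : 0 < ν) (hδ : 0 < δ) (hμ : 1 < μ)
    (hiter : ∀ j k r R, k0 ≤ k → k < j → 0 ≤ r → r < R → R ≤ R0 →
      m j r ≤ C * (m k R) ^ μ / ((j - k) ^ ν * (R - r) ^ δ))
    (σ : ℝ) (hσ0 : 0 < σ) (hσ1 : σ < 1)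
    (d : ℝ) (hd : 0 < d)
    (hdν : d ^ ν = 2 ^ ((ν + δ) * μ / (μ - 1)) * C * (m k0 R0) ^ (μ - 1) / (σ ^ δ * R0 ^ δ)) :
    m (k0 + d) ((1 - σ) * R0) = 0 := by
  have hμ1 : 0 < μ - 1 := by linarith
  have hM : 0 < m k0 R0 := by
    refine (hm_nonneg k0 R0 hk0 hR0.le le_rfl).lt_of_ne' fun hM0 => (rpow_pos_of_pos hd ν).ne' ?_
    rw [hdν, hM0, zero_rpow hμ1.ne']; simp
  have hdν' : d ^ ν * (σ * R0) ^ δ = 2 ^ ((ν + δ) / (μ - 1) * μ) * C * m k0 R0 ^ (μ - 1) := by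
    rw [mul_rpow hσ0.le hR0.le, hdν, div_mul_eq_mul_div]; field_simp
  have hσR0 : 0 < σ * R0 := by positivity
  have hσR0_le : σ * R0 ≤ R0 := by nlinarith
  have hbound n := level_le_mul_half_pow_rpow hm_nonneg hm_j hm_r hiter hk0 hC (by linarith) hd
    hσR0 hσR0_le hM (div_mul_cancel₀ _ hμ1.ne') hdν' n
  rw [show (1 - σ) * R0 = R0 - σ * R0 by ring]
  exact le_antisymm (ge_of_tendsto' (tendsto_mul_half_pow_rpow (by positivity)) hbound)
    (hm_nonneg _ _ (by linarith) (by linarith) (by linarith))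
end

section
/- Fix an integer n > 3, a real α > 0 and T > 0. Let w : [0,T) → ℝ be twice differentiable with w(0) = 1, w'(0) = 0, w(t) > 0 for all t ∈ [0,T), and satisfying the ODE −w''(t) = 1/(α^{n+1} · w(t)^n) for all t ∈ [0,T). Then for every t ∈ [0,T) one has the integral identity ∫₀^{1 − w(t)^{n−1}} h^{−1/2} · (1−h)^{−(n−3)/(2(n−1))} dh = √(2(n−1)/α^{n+1}) · t. -/
open Set

lemma point_aux (m : ℕ) (α c W W' : ℝ) (hα : 0 < α) (hW : 0 < W) (hW1 : W < 1)
    (hW'neg : W' < 0) (hc : c = 2 / (((m:ℝ)+3) * α^(m+5)))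
    (henergy : W'^2 = c * (((W^(m+3))⁻¹) - 1)) :
    |-(((m:ℝ)+3) * W^(m+2) * W')| *
      ((1 - W^(m+3)) ^ (-(1:ℝ)/2) *
        (1 - (1 - W^(m+3))) ^ (-((((m:ℝ)+1)) / (2 * (((m:ℝ)+3)))))) =
    Real.sqrt (2 * ((m:ℝ)+3) / α ^ (m+5)) := by
  have hαp : (0:ℝ) < α^(m+5) := pow_pos hα _
  have hm3 : (0:ℝ) < (m:ℝ)+3 := by positivity
  have hcpos : 0 < c := by rw [hc]; positivity
  have hp : 0 < W^(m+3) := pow_pos hW _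
  have hp1 : W^(m+3) < 1 := pow_lt_one₀ hW.le hW1 (by omega)
  have hA : 0 < 1 - W^(m+3) := by linarith
  set p := W^(m+3) with hpdef
  -- energy in product form
  have henergy' : W'^2 = c * (1 - p) / p := by
    rw [henergy]; field_simp
  have hsq : -W' = Real.sqrt (c * (1-p) / p) := by
    have h1 : Real.sqrt (W'^2) = -W' := by
      rw [Real.sqrt_sq_eq_abs, abs_of_neg hW'neg]
    rw [← h1, henergy']
  have hsplit : Real.sqrt (c * (1-p) / p) =
      Real.sqrt c * Real.sqrt (1-p) / Real.sqrt p := by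
    rw [Real.sqrt_div (by positivity), Real.sqrt_mul hcpos.le]
  -- rewrite 1 - (1 - p) = p
  rw [sub_sub_cancel]
  -- |...| = (m+3) * W^(m+2) * (-W')
  have habs : |-(((m:ℝ)+3) * W^(m+2) * W')| = ((m:ℝ)+3) * W^(m+2) * (-W') := by
    rw [abs_of_nonneg]
    · ring
    · have : 0 < ((m:ℝ)+3) * W^(m+2) * (-W') := by
        apply mul_pos (mul_pos hm3 (pow_pos hW _)); linarith
      linarith [this]
  rw [habs, hsq, hsplit]
  -- rpow manipulations
  have e1 : (1-p) ^ (-(1:ℝ)/2) = (Real.sqrt (1-p))⁻¹ := by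
    rw [show (-(1:ℝ)/2) = -(1/2 : ℝ) by ring, Real.rpow_neg hA.le,
      ← Real.sqrt_eq_rpow]
  have hpW : p = W ^ ((m:ℝ)+3) := by
    rw [hpdef, ← Real.rpow_natCast W (m+3)]; push_cast; ring_nf
  have e2 : p ^ (-(((m:ℝ)+1)) / (2 * (((m:ℝ)+3)))) = W ^ (-(((m:ℝ)+1)/2)) := by
    rw [hpW, ← Real.rpow_mul hW.le]
    congr 1
    field_simp
  have e3 : Real.sqrt p = W ^ (((m:ℝ)+3)/2) := by
    rw [hpW, Real.sqrt_eq_rpow, ← Real.rpow_mul hW.le]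
    congr 1
    ring
  have e4 : (W:ℝ)^(m+2) = W ^ ((m:ℝ)+2) := by
    rw [← Real.rpow_natCast W (m+2)]; push_cast; ring_nf
  have e2' : p ^ (-((((m:ℝ)+1)) / (2 * (((m:ℝ)+3))))) = W ^ (-(((m:ℝ)+1)/2)) := by
    rw [← e2]; congr 1; ring
  rw [e1, e2', e3, e4]
  have hsA : Real.sqrt (1-p) ≠ 0 := by positivity
  have hWrp : ∀ x : ℝ, (0:ℝ) < W ^ x := fun x => Real.rpow_pos_of_pos hW x
  -- combine W powers
  have hWcomb : W ^ ((m:ℝ)+2) / W ^ (((m:ℝ)+3)/2) * W ^ (-(((m:ℝ)+1)/2)) = 1 := by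
    rw [div_eq_mul_inv, ← Real.rpow_neg hW.le, ← Real.rpow_add hW, ← Real.rpow_add hW]
    rw [show ((m:ℝ)+2) + -(((m:ℝ)+3)/2) + -(((m:ℝ)+1)/2) = 0 by ring, Real.rpow_zero]
  calc ((m:ℝ)+3) * W ^ ((m:ℝ)+2) * (Real.sqrt c * Real.sqrt (1-p) / W ^ (((m:ℝ)+3)/2)) *
      ((Real.sqrt (1-p))⁻¹ * W ^ (-(((m:ℝ)+1)/2)))
      = (((m:ℝ)+3) * Real.sqrt c) * (Real.sqrt (1-p) * (Real.sqrt (1-p))⁻¹) *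
        (W ^ ((m:ℝ)+2) / W ^ (((m:ℝ)+3)/2) * W ^ (-(((m:ℝ)+1)/2))) := by ring
    _ = ((m:ℝ)+3) * Real.sqrt c := by
        rw [mul_inv_cancel₀ hsA, hWcomb]; ring
    _ = Real.sqrt (2 * ((m:ℝ)+3) / α ^ (m+5)) := by
        rw [show ((m:ℝ)+3) = Real.sqrt (((m:ℝ)+3)^2) by
            rw [Real.sqrt_sq hm3.le],
          ← Real.sqrt_mul (by positivity), hc]
        congr 1
        field_simp
        ring
        rw [show (9 + (m:ℝ)*6 + (m:ℝ)^2) = (3+(m:ℝ))^2 by ring, Real.sqrt_sq (by positivity)]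

/-- Integral identity, obtained by separation of variables, for the solution of
`−w'' = 1/(α^{n+1} wⁿ)`, `w(0)=1`, `w'(0)=0`:
`∫₀^{1−w(t)^{n−1}} h^{−1/2}(1−h)^{−(n−3)/(2(n−1))} dh = √(2(n−1)/α^{n+1})·t`. -/
theorem singular_ode_integral_identity
    (n : ℕ) (hn : 3 < n) (α : ℝ) (hα : 0 < α) (T : ℝ) (hT : 0 < T)
    (w w' w'' : ℝ → ℝ)
    (hw' : ∀ t ∈ Ico (0:ℝ) T, HasDerivWithinAt w (w' t) (Ico (0:ℝ) T) t)
    (hw'' : ∀ t ∈ Ico (0:ℝ) T, HasDerivWithinAt w' (w'' t) (Ico (0:ℝ) T) t)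
    (hw0 : w 0 = 1) (hw'0 : w' 0 = 0)
    (hwpos : ∀ t ∈ Ico (0:ℝ) T, 0 < w t)
    (hode : ∀ t ∈ Ico (0:ℝ) T, -(w'' t) = 1 / (α ^ (n + 1) * (w t) ^ n)) :
    ∀ t ∈ Ico (0:ℝ) T,
      ∫ h in (0:ℝ)..(1 - (w t) ^ (n - 1)),
          h ^ (-(1:ℝ)/2) * (1 - h) ^ (-(((n:ℝ) - 3) / (2 * ((n:ℝ) - 1)))) =
        Real.sqrt (2 * ((n:ℝ) - 1) / α ^ (n + 1)) * t := by
  obtain ⟨m, rfl⟩ : ∃ m, n = m + 4 := ⟨n - 4, by omega⟩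
  have hcast1 : ((m+4:ℕ):ℝ) - 3 = (m:ℝ)+1 := by push_cast; ring
  have hcast2 : ((m+4:ℕ):ℝ) - 1 = (m:ℝ)+3 := by push_cast; ring
  simp only [show m+4-1 = m+3 from rfl, show m+4+1 = m+5 from rfl, hcast1, hcast2]
  have hm3 : (0:ℝ) < (m:ℝ)+3 := by positivity
  have hαp : (0:ℝ) < α^(m+5) := pow_pos hα _
  set c : ℝ := 2 / (((m:ℝ)+3) * α^(m+5)) with hc
  -- derivative of the energy is zero
  set E : ℝ → ℝ := fun s => (w' s)^2 - c * ((w s)^(m+3))⁻¹ with hE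
  have hwne : ∀ x ∈ Ico (0:ℝ) T, (w x)^(m+3) ≠ 0 :=
    fun x hx => pow_ne_zero _ (hwpos x hx).ne'
  have hEderiv : ∀ x ∈ Ico (0:ℝ) T, HasDerivWithinAt E 0 (Ico (0:ℝ) T) x := by
    intro x hx
    have h1 := (hw'' x hx).pow 2
    have h2 := ((hw' x hx).pow (m+3)).inv (hwne x hx)
    have h3 := h1.sub (h2.const_mul c)
    refine h3.congr_deriv ?_
    symm
    have hwp := hwpos x hx
    have hode' : w'' x = -(1 / (α ^ (m+5) * (w x) ^ (m+4))) := by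
      have := hode x hx; linarith
    rw [hode', hc]
    simp only [Pi.pow_apply, show m+3-1 = m+2 from rfl]
    push_cast
    have hαne : α ≠ 0 := hα.ne'
    have hwne' : w x ≠ 0 := hwp.ne'
    field_simp
    ring
  -- the energy is constant
  have hEconst : ∀ s ∈ Ico (0:ℝ) T, E s = E 0 := by
    intro s hs
    have hsub : Icc (0:ℝ) s ⊆ Ico 0 T := fun x hx => ⟨hx.1, lt_of_le_of_lt hx.2 hs.2⟩
    have hcont : ContinuousOn E (Icc 0 s) :=
      fun x hx => ((hEderiv x (hsub hx)).continuousWithinAt).mono hsub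
    have hder : ∀ x ∈ Ico (0:ℝ) s, HasDerivWithinAt E 0 (Ici x) x := by
      intro x hx
      refine (hEderiv x ⟨hx.1, lt_of_lt_of_le hx.2 hs.2.le⟩).mono_of_mem_nhdsWithin ?_
      refine mem_nhdsWithin.2 ⟨Iio T, isOpen_Iio, lt_of_lt_of_le hx.2 hs.2.le, ?_⟩
      rintro y ⟨hy1, hy2⟩
      exact ⟨le_trans hx.1 hy2, hy1⟩
    exact constant_of_has_deriv_right_zero hcont hder s ⟨hs.1, le_refl s⟩
  have energy : ∀ s ∈ Ico (0:ℝ) T, (w' s)^2 = c * (((w s)^(m+3))⁻¹ - 1) := by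
    intro s hs
    have h := hEconst s hs
    simp only [hE, hw0, hw'0, one_pow, inv_one] at h
    ring_nf at h ⊢
    linarith
  -- sign facts
  have hw''neg : ∀ x ∈ Ico (0:ℝ) T, w'' x < 0 := by
    intro x hx
    have h := hode x hx
    have hwp := hwpos x hx
    have : 0 < 1 / (α ^ (m+5) * (w x) ^ (m+4)) := by positivity
    linarith
  have hmemnhds : ∀ x ∈ Ioo (0:ℝ) T, Ico (0:ℝ) T ∈ nhds x :=
    fun x hx => Filter.mem_of_superset (Ioo_mem_nhds hx.1 hx.2) Ioo_subset_Ico_self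
  have hco' : ContinuousOn w' (Ico (0:ℝ) T) :=
    fun x hx => (hw'' x hx).continuousWithinAt
  have hco : ContinuousOn w (Ico (0:ℝ) T) :=
    fun x hx => (hw' x hx).continuousWithinAt
  have hanti' : StrictAntiOn w' (Ico (0:ℝ) T) := by
    apply strictAntiOn_of_deriv_neg (convex_Ico 0 T) hco'
    intro x hx
    rw [interior_Ico] at hx
    rw [((hw'' x (Ioo_subset_Ico_self hx)).hasDerivAt (hmemnhds x hx)).deriv]
    exact hw''neg x (Ioo_subset_Ico_self hx)
  have hw'neg : ∀ s ∈ Ico (0:ℝ) T, 0 < s → w' s < 0 := by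
    intro s hs h0
    have := hanti' ⟨le_refl 0, hT⟩ hs h0
    rwa [hw'0] at this
  have hanti : StrictAntiOn w (Ico (0:ℝ) T) := by
    apply strictAntiOn_of_deriv_neg (convex_Ico 0 T) hco
    intro x hx
    rw [interior_Ico] at hx
    rw [((hw' x (Ioo_subset_Ico_self hx)).hasDerivAt (hmemnhds x hx)).deriv]
    exact hw'neg x (Ioo_subset_Ico_self hx) hx.1
  have hwlt1 : ∀ s ∈ Ico (0:ℝ) T, 0 < s → w s < 1 := by
    intro s hs h0
    have := hanti ⟨le_refl 0, hT⟩ hs h0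
    rwa [hw0] at this
  -- main argument
  intro t ht
  rcases eq_or_lt_of_le ht.1 with h0 | htpos
  · rw [← h0]
    simp [hw0]
  set g : ℝ → ℝ := fun s => 1 - (w s)^(m+3) with hgdef
  set G : ℝ → ℝ := fun s => -(((m:ℝ)+3) * (w s)^(m+2) * w' s) with hGdef
  have hIccsub : Icc (0:ℝ) t ⊆ Ico 0 T := fun x hx => ⟨hx.1, lt_of_le_of_lt hx.2 ht.2⟩
  have hIoosub : Ioo (0:ℝ) t ⊆ Ico 0 T := fun x hx => ⟨hx.1.le, lt_trans hx.2 ht.2⟩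
  have hgd : ∀ x ∈ Ico (0:ℝ) T, HasDerivWithinAt g (G x) (Ico (0:ℝ) T) x := by
    intro x hx
    have := ((hw' x hx).pow (m+3)).const_sub 1
    refine this.congr_deriv ?_
    symm
    simp only [hGdef, show m+3-1 = m+2 from rfl]
    push_cast
    ring
  have hgc : ContinuousOn g (Icc 0 t) :=
    fun x hx => ((hgd x (hIccsub hx)).continuousWithinAt).mono hIccsub
  have hGpos : ∀ x ∈ Ioo (0:ℝ) t, 0 < G x := by
    intro x hx
    have hxS := hIoosub hx
    have h1 := hwpos x hxS
    have h2 := hw'neg x hxS hx.1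
    have : 0 < ((m:ℝ)+3) * (w x)^(m+2) * (-(w' x)) :=
      mul_pos (mul_pos hm3 (pow_pos h1 _)) (by linarith)
    simp only [hGdef]; nlinarith
  have hmono : StrictMonoOn g (Icc 0 t) := by
    apply strictMonoOn_of_deriv_pos (convex_Icc 0 t) hgc
    intro x hx
    rw [interior_Icc] at hx
    have hxS : x ∈ Ioo (0:ℝ) T := ⟨hx.1, lt_trans hx.2 ht.2⟩
    rw [((hgd x (Ioo_subset_Ico_self hxS)).hasDerivAt (hmemnhds x hxS)).deriv]
    exact hGpos x hx
  have hg0 : g 0 = 0 := by simp [hgdef, hw0]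
  have hgtpos : 0 < g t := by
    have := hmono ⟨le_refl 0, htpos.le⟩ ⟨htpos.le, le_refl t⟩ htpos
    rwa [hg0] at this
  have himg : g '' Ioo 0 t = Ioo 0 (g t) := by
    apply Subset.antisymm
    · rintro _ ⟨x, hx, rfl⟩
      constructor
      · have := hmono ⟨le_refl 0, htpos.le⟩ ⟨hx.1.le, hx.2.le⟩ hx.1
        rwa [hg0] at this
      · exact hmono ⟨hx.1.le, hx.2.le⟩ ⟨htpos.le, le_refl t⟩ hx.2
    · have := intermediate_value_Ioo htpos.le hgc
      rwa [hg0] at this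
  have key := MeasureTheory.integral_image_eq_integral_abs_deriv_smul measurableSet_Ioo
      (fun x hx => (hgd x (hIoosub hx)).mono hIoosub) (hmono.injOn.mono Ioo_subset_Icc_self)
      (fun h => h ^ (-(1:ℝ)/2) * (1-h) ^ (-(((m:ℝ)+1) / (2 * ((m:ℝ)+3)))))
  rw [himg] at key
  have hgt : g t = 1 - (w t)^(m+3) := rfl
  rw [intervalIntegral.integral_of_le (by rw [← hgt]; exact hgtpos.le),
    MeasureTheory.integral_Ioc_eq_integral_Ioo, ← hgt, key]
  have heqon : EqOn (fun x => |G x| • ((g x) ^ (-(1:ℝ)/2) *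
      (1 - g x) ^ (-(((m:ℝ)+1) / (2 * ((m:ℝ)+3))))))
      (fun _ => Real.sqrt (2 * ((m:ℝ)+3) / α ^ (m+5))) (Ioo 0 t) := by
    intro x hx
    have hxS := hIoosub hx
    have := point_aux m α c (w x) (w' x) hα (hwpos x hxS) (hwlt1 x hxS hx.1)
      (hw'neg x hxS hx.1) hc (energy x hxS)
    simpa [hGdef, hgdef, smul_eq_mul] using this
  rw [MeasureTheory.setIntegral_congr_fun measurableSet_Ioo heqon]
  rw [MeasureTheory.setIntegral_const, Real.volume_real_Ioo_of_le htpos.le, sub_zero,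
    smul_eq_mul, mul_comm]
end

section
/- Let I ⊆ ℝ be an open interval, let n be a positive integer, let f : I → ℝ, and let u : I → ℝ be twice differentiable with u(t) > 0 for all t ∈ I and −u''(t) = f(t)/u(t)^n for all t ∈ I. Define v : I → ℝ by v(t) = u(t)^{n+1}/(n+1). Then v is twice differentiable, v(t) > 0 for all t ∈ I, and −v''(t) + (n/(n+1)) · v'(t)²/v(t) = f(t) for all t ∈ I. -/
/-- The change of variable `v = u^{n+1}/(n+1)` transforms `−u'' = f/uⁿ` into
`−v'' + (n/(n+1)) v'²/v = f`. -/
theorem change_of_variable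
    (I : Set ℝ) (hI : IsOpen I) (hI' : I.OrdConnected)
    (n : ℕ) (hn : 0 < n) (f u : ℝ → ℝ)
    (hu1 : ∀ t ∈ I, DifferentiableAt ℝ u t)
    (hu2 : ∀ t ∈ I, DifferentiableAt ℝ (deriv u) t)
    (hupos : ∀ t ∈ I, 0 < u t)
    (hode : ∀ t ∈ I, -(deriv (deriv u) t) = f t / (u t) ^ n) :
    ∀ t ∈ I,
      DifferentiableAt ℝ (fun s => (u s) ^ (n + 1) / ((n:ℝ) + 1)) t ∧
      DifferentiableAt ℝ (deriv (fun s => (u s) ^ (n + 1) / ((n:ℝ) + 1))) t ∧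
      0 < (u t) ^ (n + 1) / ((n:ℝ) + 1) ∧
      -(deriv (deriv (fun s => (u s) ^ (n + 1) / ((n:ℝ) + 1))) t) +
        ((n:ℝ) / ((n:ℝ) + 1)) *
          (deriv (fun s => (u s) ^ (n + 1) / ((n:ℝ) + 1)) t) ^ 2 /
            ((u t) ^ (n + 1) / ((n:ℝ) + 1)) = f t := by
  have hc : ((n:ℝ) + 1) ≠ 0 := by positivity
  have hderiv : ∀ s ∈ I, deriv (fun s => u s ^ (n+1) / ((n:ℝ)+1)) s
      = u s ^ n * deriv u s := by
    intro s hs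
    have h1 : HasDerivAt (fun s => u s ^ (n+1) / ((n:ℝ)+1))
        ((↑(n+1) * u s ^ (n+1-1) * deriv u s) / ((n:ℝ)+1)) s :=
      ((hu1 s hs).hasDerivAt.pow (n+1)).div_const _
    rw [h1.deriv]
    push_cast
    field_simp
  intro t ht
  have hv1 : DifferentiableAt ℝ (fun s => u s ^ (n+1) / ((n:ℝ)+1)) t :=
    ((hu1 t ht).pow _).div_const _
  have hEq : deriv (fun s => u s ^ (n+1) / ((n:ℝ)+1)) =ᶠ[nhds t]
      fun s => u s ^ n * deriv u s :=
    Filter.eventuallyEq_of_mem (hI.mem_nhds ht) hderiv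
  have hg : DifferentiableAt ℝ (fun s => u s ^ n * deriv u s) t :=
    ((hu1 t ht).pow n).mul (hu2 t ht)
  have hv2 : DifferentiableAt ℝ (deriv (fun s => u s ^ (n+1) / ((n:ℝ)+1))) t :=
    hg.congr_of_eventuallyEq hEq
  have hut : 0 < u t := hupos t ht
  have hpos : 0 < u t ^ (n+1) / ((n:ℝ)+1) := by positivity
  refine ⟨hv1, hv2, hpos, ?_⟩
  obtain ⟨m, rfl⟩ : ∃ m, n = m + 1 := ⟨n - 1, (Nat.succ_pred_eq_of_pos hn).symm⟩
  have h2 : HasDerivAt (fun s => u s ^ (m+1) * deriv u s)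
      ((↑(m+1) * u t ^ (m+1-1) * deriv u t) * deriv u t
        + u t ^ (m+1) * deriv (deriv u) t) t :=
    ((hu1 t ht).hasDerivAt.pow (m+1)).mul (hu2 t ht).hasDerivAt
  have hdd : deriv (deriv (fun s => u s ^ (m+1+1) / ((↑(m+1):ℝ)+1))) t
      = (↑(m+1) * u t ^ m * deriv u t) * deriv u t
        + u t ^ (m+1) * deriv (deriv u) t := by
    rw [hEq.deriv_eq, h2.deriv]
    simp
  rw [hdd, hderiv t ht]
  have hode' : deriv (deriv u) t = -(f t / u t ^ (m+1)) := by
    rw [← hode t ht]; ring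
  rw [hode']
  have hu0 : u t ≠ 0 := hut.ne'
  field_simp
  ring
end

section
/- Fix an integer n > 3, real numbers 0 < c₁ < c₂, and T > 0. For i = 1,2 let w_i : [0,T) → ℝ be twice differentiable with w_i(0) = 1, w_i'(0) = 0, w_i(t) > 0 for all t ∈ [0,T), and satisfying −w_i''(t) = 1/(c_i·(n−1)·w_i(t)^n) for all t ∈ [0,T). Then w₁(t) < w₂(t) for every t ∈ (0,T); that is, the solution of the Cauchy problem is strictly increasing with respect to the parameter c. -/
/-!
Put `g = c₂ w₂ⁿ − c₁ w₁ⁿ`, which is positive at `0` because `c₁ < c₂`. As long as `g > 0`,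
the equations give `w₁'' < w₂''`; since `w₂ − w₁` and its derivative vanish at `0`, this forces
`w₁ < w₂`, and then `c₁ w₁ⁿ < c₂ w₁ⁿ ≤ c₂ w₂ⁿ` keeps `g` positive. A first-crossing argument
shows that `g` never vanishes.
-/

open Set

theorem pos_of_hasDerivWithinAt_pos {f f' : ℝ → ℝ} {a b : ℝ}
    (hf : ∀ x ∈ Icc a b, HasDerivWithinAt f (f' x) (Icc a b) x) (ha : f a = 0)
    (hf' : ∀ x ∈ Ioo a b, 0 < f' x) : ∀ x ∈ Ioc a b, 0 < f x := by
  have hmono : StrictMonoOn f (Icc a b) := by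
    refine strictMonoOn_of_hasDerivWithinAt_pos (convex_Icc a b)
      (fun x hx => (hf x hx).continuousWithinAt) (fun x hx => ?_) (by rwa [interior_Icc])
    rw [interior_Icc] at hx ⊢
    exact (hf x (Ioo_subset_Icc_self hx)).mono Ioo_subset_Icc_self
  intro x hx
  exact ha ▸ hmono (left_mem_Icc.2 (hx.1.le.trans hx.2)) (Ioc_subset_Icc_self hx) hx.1

theorem lt_of_hasDerivWithinAt_of_deriv2_lt {u u' u'' v v' v'' : ℝ → ℝ} {a b : ℝ} {s : Set ℝ}
    (hab : a < b) (hs : Icc a b ⊆ s)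
    (hu : ∀ x ∈ s, HasDerivWithinAt u (u' x) s x)
    (hu' : ∀ x ∈ s, HasDerivWithinAt u' (u'' x) s x)
    (hv : ∀ x ∈ s, HasDerivWithinAt v (v' x) s x)
    (hv' : ∀ x ∈ s, HasDerivWithinAt v' (v'' x) s x)
    (ha : u a = v a) (ha' : u' a = v' a) (h'' : ∀ x ∈ Ioo a b, u'' x < v'' x) : u b < v b := by
  have hd' : ∀ x ∈ Icc a b, HasDerivWithinAt (v' - u') (v'' x - u'' x) (Icc a b) x :=
    fun x hx => ((hv' x (hs hx)).sub (hu' x (hs hx))).mono hs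
  have hd : ∀ x ∈ Icc a b, HasDerivWithinAt (v - u) (v' x - u' x) (Icc a b) x :=
    fun x hx => ((hv x (hs hx)).sub (hu x (hs hx))).mono hs
  have hd'_pos := pos_of_hasDerivWithinAt_pos hd' (sub_eq_zero.2 ha'.symm)
    fun x hx => sub_pos.2 (h'' x hx)
  have hd_pos := pos_of_hasDerivWithinAt_pos hd (sub_eq_zero.2 ha.symm)
    fun x hx => hd'_pos x (Ioo_subset_Ioc_self hx)
  exact sub_pos.1 (hd_pos b (right_mem_Ioc.2 hab))

theorem ContinuousOn.lt_on_Icc_of_lt_on_Ico {α : Type*} [ConditionallyCompleteLinearOrder α]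
    [TopologicalSpace α] [OrderTopology α] {f g : α → ℝ} {a b : α}
    (hf : ContinuousOn f (Icc a b)) (hg : ContinuousOn g (Icc a b)) (ha : f a < g a)
    (hstep : ∀ m ∈ Ioc a b, (∀ x ∈ Ico a m, f x < g x) → f m < g m) :
    ∀ x ∈ Icc a b, f x < g x := by
  by_contra! hbad
  have hcompact : IsCompact {x ∈ Icc a b | g x ≤ f x} :=
    isCompact_Icc.of_isClosed_subset (isClosed_Icc.isClosed_le hg hf) (sep_subset _ _)
  obtain ⟨m, ⟨hm, hgfm⟩, hleast⟩ := hcompact.exists_isLeast hbad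
  have ham : a < m := hm.1.lt_of_ne (by rintro rfl; linarith)
  refine (hstep m ⟨ham, hm.2⟩ fun x hx => ?_).not_ge hgfm
  by_contra! hx'
  exact (hleast ⟨⟨hx.1, hx.2.le.trans hm.2⟩, hx'⟩).not_gt hx.2

theorem one_div_mul_mul_pow_lt {n : ℕ} {c₁ c₂ k x₁ x₂ : ℝ} (hc₁ : 0 < c₁) (hk : 0 < k)
    (hx₁ : 0 < x₁) (h : c₁ * x₁ ^ n < c₂ * x₂ ^ n) :
    1 / (c₂ * k * x₂ ^ n) < 1 / (c₁ * k * x₁ ^ n) := by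
  refine one_div_lt_one_div_of_lt (by positivity) ?_
  rw [mul_right_comm c₁, mul_right_comm c₂]
  exact mul_lt_mul_of_pos_right h hk

theorem mul_pow_lt_mul_pow {n : ℕ} {c₁ c₂ x₁ x₂ : ℝ} (hc : c₁ < c₂) (hc₂ : 0 ≤ c₂)
    (hx₁ : 0 < x₁) (hx : x₁ ≤ x₂) : c₁ * x₁ ^ n < c₂ * x₂ ^ n :=
  (mul_lt_mul_of_pos_right hc (pow_pos hx₁ n)).trans_le
    (mul_le_mul_of_nonneg_left (pow_le_pow_left₀ hx₁.le hx n) hc₂)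

theorem monotonicity_in_parameter_general
    (n : ℕ) (hn : 3 < n) (c₁ c₂ : ℝ) (hc₁ : 0 < c₁) (hc : c₁ < c₂) (T : ℝ)
    (w₁ w₁' w₁'' w₂ w₂' w₂'' : ℝ → ℝ)
    (hw₁' : ∀ t ∈ Ico (0:ℝ) T, HasDerivWithinAt w₁ (w₁' t) (Ico (0:ℝ) T) t)
    (hw₁'' : ∀ t ∈ Ico (0:ℝ) T, HasDerivWithinAt w₁' (w₁'' t) (Ico (0:ℝ) T) t)
    (hw₂' : ∀ t ∈ Ico (0:ℝ) T, HasDerivWithinAt w₂ (w₂' t) (Ico (0:ℝ) T) t)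
    (hw₂'' : ∀ t ∈ Ico (0:ℝ) T, HasDerivWithinAt w₂' (w₂'' t) (Ico (0:ℝ) T) t)
    (hw₁0 : w₁ 0 = 1) (hw₁'0 : w₁' 0 = 0)
    (hw₂0 : w₂ 0 = 1) (hw₂'0 : w₂' 0 = 0)
    (hw₁pos : ∀ t ∈ Ico (0:ℝ) T, 0 < w₁ t)
    (hode₁ : ∀ t ∈ Ico (0:ℝ) T, -(w₁'' t) = 1 / (c₁ * ((n:ℝ) - 1) * (w₁ t) ^ n))
    (hode₂ : ∀ t ∈ Ico (0:ℝ) T, -(w₂'' t) = 1 / (c₂ * ((n:ℝ) - 1) * (w₂ t) ^ n)) :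
    ∀ t ∈ Ioo (0:ℝ) T, w₁ t < w₂ t := by
  rintro t ⟨ht0, htT⟩
  have hk : (0:ℝ) < n - 1 := by
    have : (3:ℝ) < n := by exact_mod_cast hn
    linarith
  have hsub : ∀ m ≤ t, Icc 0 m ⊆ Ico 0 T := fun m hm s hs => ⟨hs.1, hs.2.trans_lt (hm.trans_lt htT)⟩
  have hw'' : ∀ s ∈ Ico 0 T, c₁ * w₁ s ^ n < c₂ * w₂ s ^ n → w₁'' s < w₂'' s := fun s hs h => by
    linarith [hode₁ s hs, hode₂ s hs, one_div_mul_mul_pow_lt hc₁ hk (hw₁pos s hs) h]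
  have hlt : ∀ m ∈ Ioc 0 t, (∀ s ∈ Ico 0 m, c₁ * w₁ s ^ n < c₂ * w₂ s ^ n) → w₁ m < w₂ m :=
    fun m hm h => lt_of_hasDerivWithinAt_of_deriv2_lt hm.1 (hsub m hm.2) hw₁' hw₁'' hw₂' hw₂''
      (hw₁0.trans hw₂0.symm) (hw₁'0.trans hw₂'0.symm)
      fun s hs => hw'' s (hsub m hm.2 (Ioo_subset_Icc_self hs)) (h s ⟨hs.1.le, hs.2⟩)
  have hcont : ∀ {w w' : ℝ → ℝ}, (∀ s ∈ Ico 0 T, HasDerivWithinAt w (w' s) (Ico 0 T) s) →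
      ContinuousOn w (Icc 0 t) := fun hw s hs =>
    (hw s (hsub t le_rfl hs)).continuousWithinAt.mono (hsub t le_rfl)
  have hpow_lt : ∀ s ∈ Icc 0 t, c₁ * w₁ s ^ n < c₂ * w₂ s ^ n :=
    (continuousOn_const.mul ((hcont hw₁').pow n)).lt_on_Icc_of_lt_on_Ico
      (continuousOn_const.mul ((hcont hw₂').pow n)) (by simpa [hw₁0, hw₂0] using hc)
      fun m hm h => mul_pow_lt_mul_pow hc (hc₁.trans hc).le
        (hw₁pos m (hsub t le_rfl (Ioc_subset_Icc_self hm))) (hlt m hm h).le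
  exact hlt t ⟨ht0, le_rfl⟩ fun s hs => hpow_lt s ⟨hs.1, hs.2.le⟩

/-- Strict monotonicity with respect to the parameter `c` of the solution of the
Cauchy problem `−w'' = 1/(c(n−1)wⁿ)`, `w(0) = 1`, `w'(0) = 0`. -/
theorem monotonicity_in_parameter
    (n : ℕ) (hn : 3 < n) (c₁ c₂ : ℝ) (hc₁ : 0 < c₁) (hc : c₁ < c₂) (T : ℝ) (hT : 0 < T)
    (w₁ w₁' w₁'' w₂ w₂' w₂'' : ℝ → ℝ)
    (hw₁' : ∀ t ∈ Ico (0:ℝ) T, HasDerivWithinAt w₁ (w₁' t) (Ico (0:ℝ) T) t)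
    (hw₁'' : ∀ t ∈ Ico (0:ℝ) T, HasDerivWithinAt w₁' (w₁'' t) (Ico (0:ℝ) T) t)
    (hw₂' : ∀ t ∈ Ico (0:ℝ) T, HasDerivWithinAt w₂ (w₂' t) (Ico (0:ℝ) T) t)
    (hw₂'' : ∀ t ∈ Ico (0:ℝ) T, HasDerivWithinAt w₂' (w₂'' t) (Ico (0:ℝ) T) t)
    (hw₁0 : w₁ 0 = 1) (hw₁'0 : w₁' 0 = 0)
    (hw₂0 : w₂ 0 = 1) (hw₂'0 : w₂' 0 = 0)
    (hw₁pos : ∀ t ∈ Ico (0:ℝ) T, 0 < w₁ t)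
    (hw₂pos : ∀ t ∈ Ico (0:ℝ) T, 0 < w₂ t)
    (hode₁ : ∀ t ∈ Ico (0:ℝ) T, -(w₁'' t) = 1 / (c₁ * ((n:ℝ) - 1) * (w₁ t) ^ n))
    (hode₂ : ∀ t ∈ Ico (0:ℝ) T, -(w₂'' t) = 1 / (c₂ * ((n:ℝ) - 1) * (w₂ t) ^ n)) :
    ∀ t ∈ Ioo (0:ℝ) T, w₁ t < w₂ t :=
  monotonicity_in_parameter_general n hn c₁ c₂ hc₁ hc T w₁ w₁' w₁'' w₂ w₂' w₂'' hw₁' hw₁'' hw₂'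
    hw₂'' hw₁0 hw₁'0 hw₂0 hw₂'0 hw₁pos hode₁ hode₂
end

section
/- Fix an integer n > 3 and a real number α > 0. Then there exist T > 0 and a function w : [0,T] → ℝ, continuous on [0,T] and twice differentiable on [0,T), such that w(0) = 1, w'(0) = 0, w(t) > 0 for all t ∈ [0,T), w(T) = 0, and −w''(t) = 1/(α^{n+1}·w(t)^n) for all t ∈ [0,T). -/
open Set Real Filter intervalIntegral MeasureTheory

noncomputable def pexp (n : ℕ) : ℝ := 2 / ((n : ℝ) - 1)
noncomputable def Aconst (n : ℕ) (α : ℝ) : ℝ := Real.sqrt (2 * α ^ (n + 1) / ((n : ℝ) - 1))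
noncomputable def gfun (n : ℕ) : ℝ → ℝ := fun s =>
  if s ≤ π / 2 then (if s ≤ 0 then 2 - Real.cos s else Real.cos s ^ pexp n) else s - π / 2
noncomputable def Ffun (n : ℕ) (α : ℝ) : ℝ → ℝ :=
  fun θ => Aconst n α * ∫ s in (0:ℝ)..θ, gfun n s

lemma hn1 {n : ℕ} (hn : 3 < n) : (0:ℝ) < (n : ℝ) - 1 := by
  have : (4:ℝ) ≤ n := by exact_mod_cast hn
  linarith

lemma hp_pos {n : ℕ} (hn : 3 < n) : 0 < pexp n := div_pos two_pos (hn1 hn)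

lemma hA_sq {n : ℕ} (hn : 3 < n) {α : ℝ} (hα : 0 < α) :
    (Aconst n α) ^ 2 = 2 * α ^ (n + 1) / ((n : ℝ) - 1) := by
  have h1 := hn1 hn
  have h : 0 ≤ 2 * α ^ (n + 1) / ((n : ℝ) - 1) := by positivity
  exact Real.sq_sqrt h

lemma hA_pos {n : ℕ} (hn : 3 < n) {α : ℝ} (hα : 0 < α) : 0 < Aconst n α := by
  apply Real.sqrt_pos.2
  have := hn1 hn
  positivity

lemma g_cont {n : ℕ} (hn : 3 < n) : Continuous (gfun n) := by
  unfold gfun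
  refine Continuous.if_le ?_ (continuous_id.sub continuous_const) continuous_id continuous_const ?_
  · refine Continuous.if_le (continuous_const.sub Real.continuous_cos)
      (Real.continuous_cos.rpow_const fun x => Or.inr (hp_pos hn).le) continuous_id continuous_const ?_
    intro x hx
    simp [hx, Real.one_rpow]
    norm_num
  · intro x hx
    have h0 : ¬ (x ≤ (0:ℝ)) := by
      intro h; rw [hx] at h; nlinarith [Real.pi_gt_three]
    rw [if_neg h0, hx, Real.cos_pi_div_two, Real.zero_rpow (ne_of_gt (hp_pos hn)), sub_self]

lemma g_eq {n : ℕ} (hn : 3 < n) {x : ℝ} (hx0 : 0 ≤ x) (hx : x ≤ π / 2) :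
    gfun n x = Real.cos x ^ pexp n := by
  unfold gfun
  rw [if_pos hx]
  rcases eq_or_lt_of_le hx0 with h | h
  · rw [← h]; norm_num
  · rw [if_neg (not_le.2 h)]

lemma g_pos {n : ℕ} (hn : 3 < n) {x : ℝ} (hx : x ≠ π / 2) : 0 < gfun n x := by
  unfold gfun
  rcases le_or_gt x (π / 2) with h | h
  · rw [if_pos h]
    rcases le_or_gt x 0 with h0 | h0
    · rw [if_pos h0]; nlinarith [Real.cos_le_one x]
    · rw [if_neg (not_le.2 h0)]
      have : 0 < Real.cos x := Real.cos_pos_of_mem_Ioo ⟨by linarith [Real.pi_pos], lt_of_le_of_ne h hx⟩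
      exact Real.rpow_pos_of_pos this _
  · rw [if_neg (not_le.2 h)]; linarith

lemma g_intble {n : ℕ} (hn : 3 < n) (a b : ℝ) : IntervalIntegrable (gfun n) volume a b :=
  (g_cont hn).intervalIntegrable a b

lemma int_pos {n : ℕ} (hn : 3 < n) {a b : ℝ} (hab : a < b) : 0 < ∫ s in a..b, gfun n s := by
  rcases le_or_gt b (π / 2) with hb | hb
  · exact intervalIntegral_pos_of_pos_on (g_intble hn a b)
      (fun x hx => g_pos hn (by linarith [hx.2])) hab
  rcases le_or_gt (π / 2) a with ha | ha
  · exact intervalIntegral_pos_of_pos_on (g_intble hn a b)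
      (fun x hx => g_pos hn (by linarith [hx.1])) hab
  · have h1 : 0 < ∫ s in a..(π/2), gfun n s :=
      intervalIntegral_pos_of_pos_on (g_intble hn _ _)
        (fun x hx => g_pos hn (by linarith [hx.2])) ha
    have h2 : 0 < ∫ s in (π/2)..b, gfun n s :=
      intervalIntegral_pos_of_pos_on (g_intble hn _ _)
        (fun x hx => g_pos hn (by linarith [hx.1])) hb
    rw [← intervalIntegral.integral_add_adjacent_intervals (g_intble hn a (π/2)) (g_intble hn (π/2) b)]
    linarith

lemma F_mono {n : ℕ} (hn : 3 < n) {α : ℝ} (hα : 0 < α) : StrictMono (Ffun n α) := by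
  intro a b hab
  unfold Ffun
  have h := int_pos hn hab
  have hA := hA_pos hn hα
  have hsplit : (∫ s in (0:ℝ)..a, gfun n s) + ∫ s in a..b, gfun n s = ∫ s in (0:ℝ)..b, gfun n s :=
    intervalIntegral.integral_add_adjacent_intervals (g_intble hn _ _) (g_intble hn _ _)
  nlinarith

lemma F_hasDeriv {n : ℕ} (hn : 3 < n) (α : ℝ) (θ : ℝ) :
    HasDerivAt (Ffun n α) (Aconst n α * gfun n θ) θ := by
  unfold Ffun
  exact (intervalIntegral.integral_hasDerivAt_right (g_intble hn _ _)
    ((g_cont hn).stronglyMeasurableAtFilter _ _) (g_cont hn).continuousAt).const_mul _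

lemma F_cont {n : ℕ} (hn : 3 < n) (α : ℝ) : Continuous (Ffun n α) :=
  continuous_iff_continuousAt.2 fun x => ((F_hasDeriv hn α x).differentiableAt).continuousAt

lemma F_surj {n : ℕ} (hn : 3 < n) {α : ℝ} (hα : 0 < α) : Function.Surjective (Ffun n α) := by
  have hA := hA_pos hn hα
  apply Continuous.surjective (F_cont hn α)
  · -- atTop
    set c : ℝ := π / 2 + 1 with hc
    apply tendsto_atTop_mono' _ (Filter.eventually_atTop.2 ⟨c, fun θ hθ => ?_⟩)
      ((tendsto_atTop_add_const_right _ (Ffun n α c)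
        (Filter.Tendsto.const_mul_atTop hA (tendsto_atTop_add_const_right _ (-c) tendsto_id)))
        : Tendsto (fun θ : ℝ => Aconst n α * (θ + -c) + Ffun n α c) atTop atTop)
    have hint : (θ - c : ℝ) ≤ ∫ s in c..θ, gfun n s := by
      have h1 : ∫ s in c..θ, (1:ℝ) = θ - c := by simp
      rw [← h1]
      apply intervalIntegral.integral_mono_on hθ intervalIntegrable_const (g_intble hn _ _)
      intro x hx
      have hx1 : π / 2 < x := by have := hx.1; rw [hc] at this; linarith
      unfold gfun
      rw [if_neg (not_le.2 hx1)]
      have := hx.1; rw [hc] at this; linarith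
    have hsplit : (∫ s in (0:ℝ)..c, gfun n s) + ∫ s in c..θ, gfun n s = ∫ s in (0:ℝ)..θ, gfun n s :=
      intervalIntegral.integral_add_adjacent_intervals (g_intble hn _ _) (g_intble hn _ _)
    unfold Ffun
    nlinarith
  · -- atBot
    apply tendsto_atBot_mono' _ (Filter.eventually_atBot.2 ⟨0, fun θ hθ => ?_⟩)
      ((Filter.Tendsto.const_mul_atBot hA tendsto_id) : Tendsto (fun θ : ℝ => Aconst n α * θ) atBot atBot)
    have hint : (0 - θ : ℝ) ≤ ∫ s in θ..(0:ℝ), gfun n s := by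
      have h1 : ∫ s in θ..(0:ℝ), (1:ℝ) = 0 - θ := by simp
      rw [← h1]
      apply intervalIntegral.integral_mono_on (by linarith) intervalIntegrable_const (g_intble hn _ _)
      intro x hx
      have hx0 : x ≤ 0 := hx.2
      unfold gfun
      rw [if_pos (by linarith [Real.pi_pos] : x ≤ π / 2), if_pos hx0]
      nlinarith [Real.cos_le_one x]
    unfold Ffun
    rw [intervalIntegral.integral_symm]
    nlinarith

open Set

/-- The local solution of `−w'' = 1/(α^{n+1} wⁿ)`, `w(0)=1`, `w'(0)=0` extends until it
reaches the value zero at a finite first zero `T`. -/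
theorem exists_solution_with_first_zero (n : ℕ) (hn : 3 < n) (α : ℝ) (hα : 0 < α) :
    ∃ (T : ℝ) (w w' w'' : ℝ → ℝ),
      0 < T ∧
      ContinuousOn w (Icc 0 T) ∧
      (∀ t ∈ Ico (0:ℝ) T, HasDerivWithinAt w (w' t) (Ico (0:ℝ) T) t) ∧
      (∀ t ∈ Ico (0:ℝ) T, HasDerivWithinAt w' (w'' t) (Ico (0:ℝ) T) t) ∧
      w 0 = 1 ∧ w' 0 = 0 ∧
      (∀ t ∈ Ico (0:ℝ) T, 0 < w t) ∧ w T = 0 ∧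
      (∀ t ∈ Ico (0:ℝ) T, -(w'' t) = 1 / (α ^ (n + 1) * (w t) ^ n)) := by
  have hA := hA_pos hn hα
  have hp := hp_pos hn
  have hn1' := hn1 hn
  set p := pexp n with hp_def
  set A := Aconst n α with hA_def
  set e : ℝ ≃o ℝ := StrictMono.orderIsoOfSurjective _ (F_mono hn hα) (F_surj hn hα) with he_def
  have he : ∀ x, e x = Ffun n α x := fun x => by
    rw [he_def, StrictMono.coe_orderIsoOfSurjective]
  set θ : ℝ → ℝ := fun t => e.symm t with hθ_def
  have hFθ : ∀ t, Ffun n α (θ t) = t := fun t => by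
    rw [← he (θ t)]; exact e.apply_symm_apply t
  have hθF : ∀ x, θ (Ffun n α x) = x := fun x => by
    rw [hθ_def]; simp only [← he x]; exact e.symm_apply_apply x
  have hθcont : Continuous θ := OrderIso.continuous e.symm
  set T := Ffun n α (π/2) with hT_def
  have hF0 : Ffun n α 0 = 0 := by unfold Ffun; simp
  have hT_pos : 0 < T := by
    rw [hT_def, ← hF0]; exact F_mono hn hα (by positivity)
  have hθ0 : θ 0 = 0 := by have h := hθF 0; rwa [hF0] at h
  have hθT : θ T = π/2 := hθF _
  have hθmem : ∀ t ∈ Ico (0:ℝ) T, θ t ∈ Ico 0 (π/2) := by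
    intro t ht
    constructor
    · have h1 : θ 0 ≤ θ t := e.symm.monotone ht.1
      rwa [hθ0] at h1
    · have h2 : θ t < θ T := e.symm.strictMono ht.2
      rwa [hθT] at h2
  set w : ℝ → ℝ := fun t => Real.cos (θ t) ^ p with hw_def
  set w' : ℝ → ℝ := fun t => -(p/A) * Real.tan (θ t) with hw'_def
  set w'' : ℝ → ℝ := fun t => -(1/(α^(n+1) * (w t)^n)) with hw''_def
  have hθd : ∀ t ∈ Ico (0:ℝ) T, HasDerivAt θ (A * gfun n (θ t))⁻¹ t := by
    intro t ht
    have hx := hθmem t ht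
    exact HasDerivAt.of_local_left_inverse hθcont.continuousAt (F_hasDeriv hn α (θ t))
      (ne_of_gt (mul_pos hA (g_pos hn (ne_of_lt hx.2)))) (Eventually.of_forall hFθ)
  -- basic facts about x = θ t
  have hwd : ∀ t ∈ Ico (0:ℝ) T, HasDerivAt w (w' t) t := by
    intro t ht
    have hx := hθmem t ht
    have hC : 0 < Real.cos (θ t) :=
      Real.cos_pos_of_mem_Ioo ⟨by linarith [Real.pi_pos, hx.1], hx.2⟩
    have hgx : gfun n (θ t) = Real.cos (θ t) ^ p := g_eq hn hx.1 hx.2.le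
    have hc : HasDerivAt (fun s => Real.cos (θ s)) (-Real.sin (θ t) * (A * gfun n (θ t))⁻¹) t :=
      (Real.hasDerivAt_cos (θ t)).comp t (hθd t ht)
    have hw1 := hc.rpow_const (p := p) (Or.inl hC.ne')
    have hval : (-Real.sin (θ t) * (A * gfun n (θ t))⁻¹) * p * Real.cos (θ t) ^ (p - 1)
        = -(p/A) * Real.tan (θ t) := by
      rw [hgx, Real.rpow_sub hC, Real.rpow_one, Real.tan_eq_sin_div_cos]
      have hcp : (0:ℝ) < Real.cos (θ t) ^ p := Real.rpow_pos_of_pos hC p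
      field_simp
    rw [hval] at hw1
    exact hw1
  have hw'd : ∀ t ∈ Ico (0:ℝ) T, HasDerivAt w' (w'' t) t := by
    intro t ht
    have hx := hθmem t ht
    have hC : 0 < Real.cos (θ t) :=
      Real.cos_pos_of_mem_Ioo ⟨by linarith [Real.pi_pos, hx.1], hx.2⟩
    have hgx : gfun n (θ t) = Real.cos (θ t) ^ p := g_eq hn hx.1 hx.2.le
    have ht1 : HasDerivAt (fun s => Real.tan (θ s)) ((1 / Real.cos (θ t) ^ 2) * (A * gfun n (θ t))⁻¹) t :=
      (Real.hasDerivAt_tan hC.ne').comp t (hθd t ht)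
    have hw2 := ht1.const_mul (-(p/A))
    have hwn : w t ^ n = Real.cos (θ t) ^ p * Real.cos (θ t) ^ 2 := by
      rw [hw_def]
      have h1 : (Real.cos (θ t) ^ p) ^ n = Real.cos (θ t) ^ (p * (n:ℝ)) := by
        rw [Real.rpow_mul hC.le, Real.rpow_natCast]
      have hpn : p * (n:ℝ) = p + 2 := by
        rw [hp_def]; unfold pexp; field_simp; ring
      rw [h1, hpn, Real.rpow_add hC, show ((2:ℝ) = ((2:ℕ):ℝ)) by norm_num, Real.rpow_natCast]
    have hval : -(p/A) * ((1 / Real.cos (θ t) ^ 2) * (A * gfun n (θ t))⁻¹) = w'' t := by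
      rw [hw''_def]
      simp only
      rw [hwn, hgx]
      have hcp : (0:ℝ) < Real.cos (θ t) ^ p := Real.rpow_pos_of_pos hC p
      have hα1 : (0:ℝ) < α ^ (n+1) := pow_pos hα _
      have hA2 : A^2 = 2 * α ^ (n + 1) / ((n : ℝ) - 1) := hA_sq hn hα
      have hpA : p / A^2 = 1 / α^(n+1) := by
        rw [hA2, hp_def]
        unfold pexp
        field_simp
      have key : -(p/A) * ((1 / Real.cos (θ t) ^ 2) * (A * Real.cos (θ t) ^ p)⁻¹)
          = -(p/A^2) * (1/(Real.cos (θ t) ^ p * Real.cos (θ t) ^ 2)) := by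
        rw [mul_inv]
        field_simp [hA.ne', hC.ne', hcp.ne']
      rw [key, hpA]
      field_simp
    rw [hval] at hw2
    exact hw2
  refine ⟨T, w, w', w'', hT_pos, ?_, fun t ht => (hwd t ht).hasDerivWithinAt,
    fun t ht => (hw'd t ht).hasDerivWithinAt, ?_, ?_, ?_, ?_, ?_⟩
  · exact ((Real.continuous_cos.comp hθcont).rpow_const fun x => Or.inr hp.le).continuousOn
  · rw [hw_def]; simp only; rw [hθ0, Real.cos_zero, Real.one_rpow]
  · rw [hw'_def]; simp only; rw [hθ0, Real.tan_zero, mul_zero]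
  · intro t ht
    have hx := hθmem t ht
    have hC : 0 < Real.cos (θ t) :=
      Real.cos_pos_of_mem_Ioo ⟨by linarith [Real.pi_pos, hx.1], hx.2⟩
    exact Real.rpow_pos_of_pos hC p
  · rw [hw_def]; simp only; rw [hθT, Real.cos_pi_div_two, Real.zero_rpow hp.ne']
  · intro t ht
    rw [hw''_def]
    simp only [neg_neg]
end
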